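/- For integers k ≥ 1 and nonnegative integers n1,…,nk, the sum over all nonnegative integers t1,…,tk with t1 = tk = 0 of Π_{i=1}^{k−1} q^{t_{i+1}(n_{i+1} − t_i + t_{i+1})} · [n_i+t_i choose n_i]_q · [n_i+n_{i+1} choose n_i+t_i−t_{i+1}]_q equals the q-multinomial coefficient [n1+⋯+nk choose n1,…,nk]_q. -/

import Mathlib

open scoped BigOperators

namespace DyckTilings

/-- In the step word of a lattice path, `false` is a down step `(1,0)` and
`true` is an up step `(0,1)`.  `pathX w x0 c` is the x-coordinate of the point
of the path (started at a point with x-coordinate `x0` on the diagonal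
`x + y = 0`) lying on the diagonal `x + y = c`, i.e. the point reached after
`c` steps. -/
def pathX (w : List Bool) (x0 : ℤ) (c : ℤ) : ℤ :=
  x0 + ((w.take c.toNat).count false : ℤ)

/-- `w` is (the step word of) a Dyck path of length `2 * n`: a lattice path
from `(0,0)` to `(n,n)` never going below the line `y = x`. -/
def IsDyckWord (n : ℕ) (w : List Bool) : Prop :=
  w.length = 2 * n ∧ w.count false = n ∧
    ∀ c : ℤ, 0 ≤ c → c ≤ 2 * n → 2 * pathX w 0 c ≤ c

/-- the Dyck path `Δ_k`: `k` up steps followed by `k` down steps -/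
def delta (k : ℕ) : List Bool :=
  List.replicate k true ++ List.replicate k false

/-- `Δ_{N 0, N 1, …, N (k-1)} = Δ_{N 0} * ⋯ * Δ_{N (k-1)}` (concatenation of
Dyck paths is concatenation of their step words) -/
def deltaComp (N : ℕ → ℕ) (k : ℕ) : List Bool :=
  ((List.range k).map fun i => delta (N i)).flatten

/-- the q-integer `[m]_q = 1 + q + ⋯ + q^(m-1)` -/
def qint {K : Type*} [CommRing K] (q : K) (m : ℕ) : K :=
  ∑ i ∈ Finset.range m, q ^ i

/-- the q-factorial `[m]_q! = [1]_q [2]_q ⋯ [m]_q` -/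
def qfact {K : Type*} [CommRing K] (q : K) (m : ℕ) : K :=
  ∏ i ∈ Finset.range m, qint q (i + 1)

/-- the q-binomial coefficient `[m choose j]_q`, equal to `0` when `j < 0` or
`j > m` -/
noncomputable def qbinom {K : Type*} [Field K] (q : K) (m : ℕ) (j : ℤ) : K :=
  if 0 ≤ j ∧ j ≤ m then qfact q m / (qfact q j.toNat * qfact q (m - j.toNat)) else 0

/-- the height (value of `y - x`) of the point of the path `w` (started on the
main diagonal) lying on the diagonal `x + y = c` -/
def heightAt (w : List Bool) (c : ℕ) : ℤ :=
  (c : ℤ) - 2 * pathX w 0 (c : ℤ)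

/-- the indices of the up steps of `w`; each chord of `w` consists of an up
step and its matching down step, so chords are indexed by `upSteps w` -/
def upSteps (w : List Bool) : Finset ℕ :=
  (Finset.range w.length).filter fun i => w.getD i false = true

/-- the index of the down step matched with the up step at index `i` -/
noncomputable def matchIdx (w : List Bool) (i : ℕ) : ℕ :=
  sInf {j : ℕ | i < j ∧ heightAt w (j + 1) = heightAt w i}

/-- the length `|c|` of the chord of the up step at index `i`: the difference
of the x-coordinates of the starting point of the up step and the ending point
of the matching down step -/
noncomputable def chordLen (w : List Bool) (i : ℕ) : ℕ :=
  (pathX w 0 ((matchIdx w i : ℤ) + 1) - pathX w 0 (i : ℤ)).toNat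

/-- the height `ht(c)` of the chord of the up step at index `i`: the chord lies
between the lines `y = x + ht(c) - 1` and `y = x + ht(c)` -/
def chordHt (w : List Bool) (i : ℕ) : ℕ := (heightAt w (i + 1)).toNat

/-- `ht(μ) = Σ_{c ∈ C(μ)} (ht(c) - 1)` -/
def htSum (w : List Bool) : ℕ := ∑ i ∈ upSteps w, (chordHt w i - 1)

/-! ### Skew shapes and (full) cover-inclusive Dyck tilings -/

/-- The set of cells of the skew shape `lam/mu`, for Dyck paths `lam` and `mu`
with `mu` weakly above `lam`; the cell `(x,y)` is the unit square
`[x,x+1] × [y,y+1]`, and it belongs to `lam/mu` exactly when, on the diagonal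
`x + y + 1` through its center, `mu` passes weakly to its left and `lam`
weakly to its right. -/
def skewCells (lam mu : List Bool) : Set (ℤ × ℤ) :=
  {c | pathX mu 0 (c.1 + c.2 + 1) ≤ c.1 ∧ c.1 + 1 ≤ pathX lam 0 (c.1 + c.2 + 1)}

/-- the number of cells `|λ/μ|` of the skew shape -/
noncomputable def ncells (lam mu : List Bool) : ℕ := (skewCells lam mu).ncard

/-- the cells of a ribbon starting at the cell `p`, with `true` = north step
and `false` = east step -/
def cellsOf : List Bool → ℤ × ℤ → List (ℤ × ℤ)
  | [], p => [p]
  | s :: rest, p => p :: cellsOf rest (if s then (p.1, p.2 + 1) else (p.1 + 1, p.2))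

/-- A Dyck tile: a ribbon whose sequence of cells, read from southwest to
northeast, follows a Dyck word (equivalently, the centers of its cells form a
Dyck path). -/
def IsDyckTile (s : Set (ℤ × ℤ)) : Prop :=
  ∃ (x0 y0 : ℤ) (k : ℕ) (u : List Bool), IsDyckWord k u ∧
    s = {c | c ∈ cellsOf u (x0, y0)}

/-- southeast translation by `(k, -k)` -/
def shiftSE (k : ℤ) (s : Set (ℤ × ℤ)) : Set (ℤ × ℤ) :=
  (fun c => (c.1 + k, c.2 - k)) '' s

/-- cover-inclusiveness: if a tile `η₁` has a cell to the southeast of a cell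
of a tile `η₂`, then that southeast translation of `η₂` is contained in `η₁` -/
def IsCoverInclusive (T : Set (Set (ℤ × ℤ))) : Prop :=
  ∀ η₁ ∈ T, ∀ η₂ ∈ T, ∀ c ∈ η₂, ∀ k : ℤ, 1 ≤ k →
    (c.1 + k, c.2 - k) ∈ η₁ → shiftSE k η₂ ⊆ η₁

/-- `T` is a cover-inclusive Dyck tiling of the skew shape `lam/mu` (in
particular `mu` lies weakly above `lam`, so that `lam/mu` is defined). -/
def IsDyckTiling (lam mu : List Bool) (T : Set (Set (ℤ × ℤ))) : Prop :=
  (∀ c : ℤ, pathX mu 0 c ≤ pathX lam 0 c) ∧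
  (∀ η ∈ T, IsDyckTile η) ∧
  T.PairwiseDisjoint id ∧
  (⋃ η ∈ T, η) = skewCells lam mu ∧
  IsCoverInclusive T

/-- the number of tiles `|T|` of a tiling -/
noncomputable def ntiles (T : Set (Set (ℤ × ℤ))) : ℕ := T.ncard

/-- the half-length of a Dyck tile (a Dyck tile of length `2k` has `2k+1`
cells) -/
noncomputable def halfLen (s : Set (ℤ × ℤ)) : ℕ := s.ncard / 2

/-- `‖T‖`: the sum of the half-lengths of the tiles of `T` -/
noncomputable def normT (T : Set (Set (ℤ × ℤ))) : ℕ := ∑ᶠ η ∈ T, halfLen η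

/-! ### Triangles, regions `λ/μ`, and truncated Dyck tilings

The unit cell `(x,y)` is cut by its diagonal of slope `-1` into a southwest
half-cell, the triangle `(x, y, false)`, and a northeast half-cell, the
triangle `(x, y, true)`. -/

/-- Membership of a triangle in the region `lam/mu`, where `lam` is a Dyck
path of semilength `n` from `(0,0)` to `(n,n)` and `mu` is a lattice path
starting at `(-a, a)` lying weakly above `lam`; the region is bounded by
`lam`, `mu` and the two segments of slope `-1` joining `(0,0)` to `(-a,a)` and
`(n,n)` to the endpoint of `mu`. -/
def TriInRegion (n : ℕ) (lam mu : List Bool) (a : ℤ) (t : ℤ × ℤ × Bool) : Prop :=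
  pathX mu (-a) (t.1 + t.2.1 + 1) ≤ t.1 ∧
  t.1 + 1 ≤ pathX lam 0 (t.1 + t.2.1 + 1) ∧
  (if t.2.2 then 0 ≤ t.1 + t.2.1 + 1 ∧ t.1 + t.2.1 + 2 ≤ 2 * (n : ℤ)
   else 0 ≤ t.1 + t.2.1 ∧ t.1 + t.2.1 + 1 ≤ 2 * (n : ℤ))

/-- `L(λ; a, b)`: the lattice paths of up and down steps from `(-a, a)` to
`(n-b, n+b)` that never go below `lam` -/
def LSet (n : ℕ) (lam : List Bool) (a b : ℤ) : Set (List Bool) :=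
  {w | w.length = 2 * n ∧ (w.count false : ℤ) = (n : ℤ) - b + a ∧
    ∀ c : ℤ, 0 ≤ c → c ≤ 2 * n → pathX w (-a) c ≤ pathX lam 0 c}

/-- twice the area `|λ/μ|` of the region `lam/mu` (i.e. the number of
triangles contained in it) -/
def area2 (n : ℕ) (lam mu : List Bool) (a : ℤ) : ℤ :=
  ∑ d ∈ Finset.range (2 * n),
    (pathX lam 0 (d : ℤ) - pathX mu (-a) (d : ℤ) +
      (pathX lam 0 ((d : ℤ) + 1) - pathX mu (-a) ((d : ℤ) + 1)))

/-- the last (northeast) cell of a ribbon with start cell `(x0, y0)` and step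
word `u` -/
def lastCell (x0 y0 : ℤ) (u : List Bool) : ℤ × ℤ :=
  (x0 + u.count false, y0 + u.count true)

/-- A truncated Dyck tile: a Dyck tile of positive length with the southwest
half-cell of its southwest cell and the northeast half-cell of its northeast
cell cut off. -/
def IsTruncTile (s : Set (ℤ × ℤ × Bool)) : Prop :=
  ∃ (x0 y0 : ℤ) (k : ℕ) (u : List Bool), 0 < k ∧ IsDyckWord k u ∧
    s = {t : ℤ × ℤ × Bool | (t.1, t.2.1) ∈ cellsOf u (x0, y0)} \
        {(x0, y0, false), ((lastCell x0 y0 u).1, (lastCell x0 y0 u).2, true)}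

/-- southeast translation of a set of triangles by `(1, -1)` -/
def shiftTriSE (s : Set (ℤ × ℤ × Bool)) : Set (ℤ × ℤ × Bool) :=
  (fun t => (t.1 + 1, t.2.1 - 1, t.2.2)) '' s

/-- `T` is a cover-inclusive truncated Dyck tiling of (a subregion of) the
region `lam/mu`: the tiles are disjoint truncated Dyck tiles inside the
region, every tile whose southeast translate by `(1,-1)` meets the region has
this translate contained in a tile of `T`, and no two tiles share a border of
slope `-1`. -/
def IsTruncTiling (n : ℕ) (lam mu : List Bool) (a : ℤ)
    (T : Set (Set (ℤ × ℤ × Bool))) : Prop :=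
  (∀ η ∈ T, IsTruncTile η) ∧
  T.PairwiseDisjoint id ∧
  (∀ η ∈ T, ∀ t ∈ η, TriInRegion n lam mu a t) ∧
  (∀ η ∈ T, (∃ t ∈ shiftTriSE η, TriInRegion n lam mu a t) →
      ∃ η' ∈ T, shiftTriSE η ⊆ η') ∧
  (∀ η₁ ∈ T, ∀ η₂ ∈ T, η₁ ≠ η₂ →
      ∀ x y : ℤ, ¬((x, y, false) ∈ η₁ ∧ (x, y, true) ∈ η₂))

/-- the half-length of a truncated Dyck tile (a truncated Dyck tile of
half-length `k` consists of `4k` triangles) -/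
noncomputable def halfLenT (s : Set (ℤ × ℤ × Bool)) : ℕ := s.ncard / 4

/-- `‖T‖` for truncated tilings: the sum of the half-lengths of the tiles -/
noncomputable def normTT (T : Set (Set (ℤ × ℤ × Bool))) : ℕ := ∑ᶠ η ∈ T, halfLenT η

/-- `B_q(λ; a, b) = Σ_{μ ∈ L(λ;a,b)} Σ_{T ∈ TD(λ/μ)} q^{|λ/μ| - ‖T‖}`, a
polynomial in `q^{1/2}`, expressed in the variable `v = q^{1/2}` (so `q = v²`
and `q^{|λ/μ| - ‖T‖} = v^{2|λ/μ| - 2‖T‖}`). -/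
noncomputable def B (v : RatFunc ℚ) (n : ℕ) (lam : List Bool) (a b : ℤ) : RatFunc ℚ :=
  ∑ᶠ mu ∈ LSet n lam a b, ∑ᶠ T ∈ {T | IsTruncTiling n lam mu a T},
    v ^ (area2 n lam mu a - 2 * (normTT T : ℤ))

/-! ### Hermite histories and matchings -/

/-- A Hermite history on the Dyck path `mu` of length `2n`: a labeling of the
down steps of `mu` such that a down step of height `h` gets a label in
`{0, 1, …, h-1}` (encoded as a function on `ℕ` vanishing off the down steps). -/
def HHSet (n : ℕ) (mu : List Bool) : Set (ℕ → ℕ) :=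
  {σ | (∀ j, j < 2 * n → mu.getD j true = false → σ j < (heightAt mu j).toNat) ∧
       ∀ j, ¬(j < 2 * n ∧ mu.getD j true = false) → σ j = 0}

/-- `‖H‖`: the sum of the labels of a Hermite history -/
def normH (n : ℕ) (σ : ℕ → ℕ) : ℕ := ∑ j ∈ Finset.range (2 * n), σ j

/-- a complete matching on `{0, 1, …, 2n-1}` -/
def IsMatching (n : ℕ) (π : Set (ℕ × ℕ)) : Prop :=
  (∀ p ∈ π, p.1 < p.2 ∧ p.2 < 2 * n) ∧
  ∀ m, m < 2 * n → ∃! p, p ∈ π ∧ (p.1 = m ∨ p.2 = m)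

/-- `M(μ)`: the complete matchings whose shape is the Dyck path `mu` (the
`i`-th step of `mu` is an up step iff `i` is the smaller element of its pair) -/
def MSet (n : ℕ) (mu : List Bool) : Set (Set (ℕ × ℕ)) :=
  {π | IsMatching n π ∧ ∀ i, i < 2 * n → (mu.getD i false = true ↔ ∃ p ∈ π, p.1 = i)}

/-- the number of crossings of a matching -/
noncomputable def cro (π : Set (ℕ × ℕ)) : ℕ :=
  {pq : (ℕ × ℕ) × (ℕ × ℕ) | pq.1 ∈ π ∧ pq.2 ∈ π ∧
    pq.1.1 < pq.2.1 ∧ pq.2.1 < pq.1.2 ∧ pq.1.2 < pq.2.2}.ncard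

/-- the number of nestings of a matching -/
noncomputable def nest (π : Set (ℕ × ℕ)) : ℕ :=
  {pq : (ℕ × ℕ) × (ℕ × ℕ) | pq.1 ∈ π ∧ pq.2 ∈ π ∧
    pq.1.1 < pq.2.1 ∧ pq.2.2 < pq.1.2}.ncard

/-- `D(*/μ)`: cover-inclusive Dyck tilings of `λ/μ` over all Dyck paths `λ`
of length `2n` (for fixed `mu`, a tiling determines `lam`) -/
def DstarSet (n : ℕ) (mu : List Bool) : Set (Set (Set (ℤ × ℤ))) :=
  {T | ∃ lam, IsDyckWord n lam ∧ IsDyckTiling lam mu T}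

/-- `D(2n)`: the disjoint union of the sets `D(ν/ρ)` over all pairs of Dyck
paths `ν, ρ` of length `2n`, realized as the set of triples `(ν, ρ, T)` -/
def DDSet (n : ℕ) : Set (List Bool × List Bool × Set (Set (ℤ × ℤ))) :=
  {x | IsDyckWord n x.1 ∧ IsDyckWord n x.2.1 ∧ IsDyckTiling x.1 x.2.1 x.2.2}

/-! Write `t₁ = a` instead of `t₁ = 0`; the sum then becomes
`[n₁+⋯+nₖ choose n₁,…,nₖ]_q · [n₂+⋯+nₖ choose a]_q`.  This is proved by induction on `k`,
summing first over the tail `(t₂, …, tₖ)` with `t₂ = b` fixed: the inner sum is known by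
induction, the sum over `b` collapses by the q-Vandermonde identity, and
`[S choose n₁+a][n₁+a choose n₁] = [S choose n₁][S-n₁ choose a]` (with `S = n₁+⋯+nₖ`) finishes
the step.
Sequences are indexed from `0`, so `t 0` plays the role of `t₁`. -/

open Finset

section QCalculus

variable {K : Type*} [Field K]

lemma qint_add (q : K) (a b : ℕ) : qint q (a + b) = qint q a + q ^ a * qint q b := by
  simp only [qint, sum_range_add, pow_add, mul_sum]

lemma qfact_zero (q : K) : qfact q 0 = 1 := prod_range_zero _

lemma qfact_succ (q : K) (m : ℕ) : qfact q (m + 1) = qfact q m * qint q (m + 1) :=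
  prod_range_succ _ _

lemma qbinom_natCast (q : K) {m j : ℕ} (h : j ≤ m) :
    qbinom q m j = qfact q m / (qfact q j * qfact q (m - j)) := by
  rw [qbinom, if_pos ⟨Int.natCast_nonneg j, by exact_mod_cast h⟩, Int.toNat_natCast]

lemma qbinom_of_neg (q : K) (m : ℕ) {j : ℤ} (h : j < 0) : qbinom q m j = 0 :=
  if_neg fun h' => by omega

lemma qbinom_of_lt (q : K) {m : ℕ} {j : ℤ} (h : (m : ℤ) < j) : qbinom q m j = 0 :=
  if_neg fun h' => by omega

def qmultinom (q : K) (N : ℕ → ℕ) (k : ℕ) : K :=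
  qfact q (∑ i ∈ range k, N i) / ∏ i ∈ range k, qfact q (N i)

end QCalculus

section Indeterminate

open RatFunc

variable {K : Type*} [Field K]

lemma qint_X_ne_zero {n : ℕ} (hn : 0 < n) : qint (X : RatFunc K) n ≠ 0 := by
  have h : qint (X : RatFunc K) n =
      algebraMap (Polynomial K) (RatFunc K) (∑ i ∈ range n, Polynomial.X ^ i) := by
    simp [qint, RatFunc.algebraMap_X]
  rw [h, Ne, map_eq_zero_iff _ (RatFunc.algebraMap_injective K)]
  intro h0
  have := congrArg (Polynomial.eval 0) h0
  simp [Polynomial.eval_finsetSum, zero_pow_eq, hn] at this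

lemma qfact_X_ne_zero (n : ℕ) : qfact (X : RatFunc K) n ≠ 0 :=
  prod_ne_zero_iff.2 fun i _ => qint_X_ne_zero i.succ_pos

lemma qbinom_zero_right (m : ℕ) : qbinom (X : RatFunc K) m 0 = 1 := by
  rw [← Nat.cast_zero, qbinom_natCast _ m.zero_le, qfact_zero, one_mul, Nat.sub_zero,
    div_self (qfact_X_ne_zero m)]

lemma qbinom_self (m : ℕ) : qbinom (X : RatFunc K) m m = 1 := by
  rw [qbinom_natCast _ le_rfl, Nat.sub_self, qfact_zero, mul_one, div_self (qfact_X_ne_zero m)]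

theorem qbinom_succ (m : ℕ) (j : ℤ) :
    qbinom (X : RatFunc K) (m + 1) j =
      qbinom X m j + X ^ ((m : ℤ) + 1 - j) * qbinom X m (j - 1) := by
  rcases lt_trichotomy j 0 with hj | rfl | hj
  · simp [qbinom_of_neg _ _ hj, qbinom_of_neg _ _ (by omega : j - 1 < 0)]
  · simp [qbinom_zero_right, qbinom_of_neg]
  rcases lt_or_ge (m : ℤ) j with hm | hm
  · rcases eq_or_lt_of_le (Int.add_one_le_iff.2 hm) with rfl | hm'
    · rw [add_sub_cancel_right, sub_self, zpow_zero, one_mul, qbinom_of_lt _ (lt_add_one _),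
        zero_add, ← Nat.cast_succ, qbinom_self, qbinom_self]
    · rw [qbinom_of_lt _ (by push_cast; omega), qbinom_of_lt _ hm,
        qbinom_of_lt _ (by omega : (m : ℤ) < j - 1), mul_zero, add_zero]
  obtain ⟨i, rfl⟩ : ∃ i : ℕ, j = i + 1 := ⟨(j - 1).toNat, by omega⟩
  obtain ⟨r, rfl⟩ : ∃ r : ℕ, m = i + 1 + r := ⟨m - (i + 1), by omega⟩
  have e1 : ((i + 1 + r : ℕ) : ℤ) + 1 - ((i : ℤ) + 1) = ((r + 1 : ℕ) : ℤ) := by push_cast; ring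
  rw [e1, zpow_natCast, add_sub_cancel_right, ← Nat.cast_succ,
    qbinom_natCast _ (by omega : i + 1 ≤ i + 1 + r + 1),
    qbinom_natCast _ (by omega : i + 1 ≤ i + 1 + r), qbinom_natCast _ (by omega : i ≤ i + 1 + r),
    show i + 1 + r + 1 - (i + 1) = r + 1 by omega, show i + 1 + r - (i + 1) = r by omega,
    show i + 1 + r - i = r + 1 by omega, qfact_succ _ (i + 1 + r), qfact_succ _ i, qfact_succ _ r,
    show i + 1 + r + 1 = (r + 1) + (i + 1) by omega, qint_add]
  have := qfact_X_ne_zero (K := K) i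
  have := qfact_X_ne_zero (K := K) r
  have := qfact_X_ne_zero (K := K) (i + 1 + r)
  have := qint_X_ne_zero (K := K) i.succ_pos
  have := qint_X_ne_zero (K := K) r.succ_pos
  field_simp

theorem qbinom_vandermonde (A P : ℕ) (c : ℤ) {R : ℕ} (hR : P < R) :
    ∑ b ∈ range R, X ^ ((b : ℤ) * (A - c + b)) * qbinom X A (c - b) * qbinom X P b =
      qbinom (X : RatFunc K) (A + P) c := by
  induction P generalizing c R with
  | zero =>
    rw [sum_eq_single_of_mem 0 (mem_range.2 hR) fun b _ hb =>
      by rw [qbinom_of_lt (m := 0) _ (by omega), mul_zero]]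
    simp [qbinom_zero_right]
  | succ P ih =>
    obtain ⟨R, rfl⟩ : ∃ R', R = R' + 1 := ⟨R - 1, by omega⟩
    have hX : (X : RatFunc K) ≠ 0 := X_ne_zero
    have hshift : ∀ s : ℕ,
        X ^ (((s + 1 : ℕ) : ℤ) * (A - c + (s + 1 : ℕ))) * qbinom X A (c - (s + 1 : ℕ)) *
            (X ^ ((P : ℤ) + 1 - (s + 1 : ℕ)) * qbinom X P ((s + 1 : ℕ) - 1)) =
          X ^ ((A : ℤ) + P + 1 - c) *
            (X ^ ((s : ℤ) * (A - (c - 1) + s)) * qbinom (X : RatFunc K) A (c - 1 - s) *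
              qbinom X P s) := by
      intro s
      have hexp : (X : RatFunc K) ^ (((s + 1 : ℕ) : ℤ) * (A - c + (s + 1 : ℕ))) *
          X ^ ((P : ℤ) + 1 - (s + 1 : ℕ)) =
            X ^ ((A : ℤ) + P + 1 - c) * X ^ ((s : ℤ) * (A - (c - 1) + s)) := by
        rw [← zpow_add₀ hX, ← zpow_add₀ hX]
        push_cast
        ring_nf
      rw [show c - ((s + 1 : ℕ) : ℤ) = c - 1 - s by push_cast; ring,
        show ((s + 1 : ℕ) : ℤ) - 1 = s by push_cast; ring]
      linear_combination (qbinom (X : RatFunc K) A (c - 1 - s) * qbinom X P s) * hexp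
    rw [sum_congr rfl fun b _ => by rw [qbinom_succ P, mul_add (_ * qbinom (X : RatFunc K) A _)],
      sum_add_distrib]
    rw [ih c (by omega), sum_range_succ', Nat.cast_zero, zero_sub,
      qbinom_of_neg _ _ (by norm_num : (-1 : ℤ) < 0), mul_zero, mul_zero, add_zero]
    simp_rw [hshift]
    rw [← mul_sum, ih (c - 1) (by omega), ← add_assoc, qbinom_succ (A + P)]
    push_cast
    ring_nf

theorem qbinom_mul_qbinom (m i j : ℕ) :
    qbinom (X : RatFunc K) m ((i : ℤ) + j) * qbinom X (i + j) i =
      qbinom X m i * qbinom X (m - i) j := by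
  by_cases h : i + j ≤ m
  · obtain ⟨r, rfl⟩ : ∃ r, m = i + j + r := ⟨m - (i + j), by omega⟩
    rw [← Nat.cast_add, qbinom_natCast _ h, qbinom_natCast _ (Nat.le_add_right i j),
      qbinom_natCast _ (by omega : i ≤ i + j + r), qbinom_natCast _ (by omega : j ≤ i + j + r - i),
      show i + j + r - (i + j) = r by omega, show i + j - i = j by omega,
      show i + j + r - i = j + r by omega, show j + r - j = r by omega]
    have := qfact_X_ne_zero (K := K) i
    have := qfact_X_ne_zero (K := K) j
    have := qfact_X_ne_zero (K := K) r
    have := qfact_X_ne_zero (K := K) (i + j)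
    have := qfact_X_ne_zero (K := K) (j + r)
    field_simp
  · rw [qbinom_of_lt _ (by omega : (m : ℤ) < i + j), zero_mul]
    by_cases hi : i ≤ m
    · rw [qbinom_of_lt _ (by omega : ((m - i : ℕ) : ℤ) < j), mul_zero]
    · rw [qbinom_of_lt _ (by omega : (m : ℤ) < i), zero_mul]

theorem qmultinom_succ (N : ℕ → ℕ) (k : ℕ) :
    qmultinom (X : RatFunc K) N (k + 1) =
      qbinom X (∑ i ∈ range (k + 1), N i) (N 0) * qmultinom X (fun i => N (i + 1)) k := by
  rw [qmultinom, qmultinom, sum_range_succ', prod_range_succ', add_comm _ (N 0),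
    qbinom_natCast _ (Nat.le_add_right _ _), Nat.add_sub_cancel_left]
  have := qfact_X_ne_zero (K := K) (N 0)
  have := qfact_X_ne_zero (K := K) (∑ i ∈ range k, N (i + 1))
  have : ∏ i ∈ range k, qfact (X : RatFunc K) (N (i + 1)) ≠ 0 :=
    prod_ne_zero_iff.2 fun i _ => qfact_X_ne_zero _
  field_simp

end Indeterminate

theorem finsum_mem_eq_sum_finsum_mem_fiber {α β M : Type*} [AddCommMonoid M]
    {s : Set α} {f : α → M} (g : α → β) {B : Finset β} (hf : (s ∩ Function.support f).Finite)
    (hg : ∀ x ∈ s, f x ≠ 0 → g x ∈ B) :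
    ∑ᶠ x ∈ s, f x = ∑ b ∈ B, ∑ᶠ x ∈ s ∩ g ⁻¹' {b}, f x := by
  classical
  rw [finsum_mem_eq_sum f hf, ← sum_fiberwise_of_maps_to fun x hx =>
    hg x (hf.mem_toFinset.1 hx).1 (hf.mem_toFinset.1 hx).2]
  refine sum_congr rfl fun b _ => ?_
  rw [finsum_mem_eq_sum f (hf.subset fun x hx => ⟨hx.1.1, hx.2⟩)]
  refine sum_congr ?_ fun _ _ => rfl
  ext x
  simp only [mem_filter, Set.Finite.mem_toFinset, Set.mem_inter_iff, Set.mem_preimage,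
    Set.mem_singleton_iff]
  tauto

section Sequences

variable {K : Type*} [Field K]

def seqsFrom (k a : ℕ) : Set (ℕ → ℕ) := {t | t 0 = a ∧ ∀ i, k ≤ i → t i = 0}

noncomputable def stepWeight (q : K) (N : ℕ → ℕ) (i a b : ℕ) : K :=
  q ^ ((b : ℤ) * ((N (i + 1) : ℤ) - a + b)) * qbinom q (N i + a) (N i) *
    qbinom q (N i + N (i + 1)) ((N i : ℤ) + a - b)

noncomputable def seqWeight (q : K) (N t : ℕ → ℕ) (k : ℕ) : K :=
  ∏ i ∈ range k, stepWeight q N i (t i) (t (i + 1))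

lemma stepWeight_of_lt (q : K) (N : ℕ → ℕ) {i a b : ℕ} (h : N i + a < b) :
    stepWeight q N i a b = 0 := by
  rw [stepWeight, qbinom_of_neg _ (N i + N (i + 1)) (by omega), mul_zero]

lemma seqWeight_succ (q : K) (N t : ℕ → ℕ) (k : ℕ) :
    seqWeight q N t (k + 1) =
      stepWeight q N 0 (t 0) (t 1) * seqWeight q (fun i => N (i + 1)) (fun i => t (i + 1)) k := by
  rw [seqWeight, prod_range_succ', mul_comm]
  rfl

lemma le_of_seqWeight_succ_ne_zero {q : K} {N t : ℕ → ℕ} {k : ℕ}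
    (h : seqWeight q N t (k + 1) ≠ 0) : t 1 ≤ N 0 + t 0 := by
  by_contra hlt
  rw [seqWeight_succ, stepWeight_of_lt q N (not_le.1 hlt), zero_mul] at h
  exact h rfl

lemma tail_mem_seqsFrom {k a : ℕ} {t : ℕ → ℕ} (ht : t ∈ seqsFrom (k + 1) a) :
    (fun i => t (i + 1)) ∈ seqsFrom k (t 1) :=
  ⟨rfl, fun i hi => ht.2 (i + 1) (by omega)⟩

lemma injOn_tail_seqsFrom (k a : ℕ) : (seqsFrom k a).InjOn fun t i => t (i + 1) := by
  intro t ht t' ht' h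
  funext i
  cases i with
  | zero => rw [ht.1, ht'.1]
  | succ i => exact congrFun h i

theorem finite_seqsFrom_inter_support (q : K) (N : ℕ → ℕ) (k a : ℕ) :
    (seqsFrom k a ∩ Function.support fun t => seqWeight q N t k).Finite := by
  induction k generalizing N a with
  | zero =>
    refine (Set.finite_singleton 0).subset fun t ht => ?_
    funext i
    exact ht.1.2 i i.zero_le
  | succ k ih =>
    refine Set.Finite.of_finite_image ?_ ((injOn_tail_seqsFrom _ a).mono Set.inter_subset_left)
    refine ((Set.finite_Iic (N 0 + a)).biUnion fun b _ => ih (fun i => N (i + 1)) b).subset ?_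
    rintro _ ⟨t, ⟨ht, hne⟩, rfl⟩
    rw [Function.mem_support, seqWeight_succ] at hne
    refine Set.mem_biUnion (x := t 1) ?_ ⟨tail_mem_seqsFrom ht, right_ne_zero_of_mul hne⟩
    exact ht.1 ▸ le_of_seqWeight_succ_ne_zero (q := q) (by rwa [seqWeight_succ])

theorem finsum_seqWeight_succ (q : K) (N : ℕ → ℕ) (k a : ℕ) {R : ℕ} (hR : N 0 + a < R) :
    ∑ᶠ t ∈ seqsFrom (k + 1) a, seqWeight q N t (k + 1) =
      ∑ b ∈ range R, stepWeight q N 0 a b *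
        ∑ᶠ s ∈ seqsFrom k b, seqWeight q (fun i => N (i + 1)) s k := by
  rw [finsum_mem_eq_sum_finsum_mem_fiber (fun t => t 1) (finite_seqsFrom_inter_support q N _ a)
    fun t ht hne => mem_range.2 ((le_of_seqWeight_succ_ne_zero hne).trans_lt (ht.1 ▸ hR))]
  refine sum_congr rfl fun b _ => ?_
  rw [mul_finsum_mem]
  refine finsum_mem_eq_of_bijOn (fun t i => t (i + 1)) ⟨?_, ?_, ?_⟩ ?_
  · rintro t ⟨ht, rfl⟩
    exact tail_mem_seqsFrom ht
  · exact (injOn_tail_seqsFrom _ a).mono Set.inter_subset_left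
  · intro s hs
    refine ⟨fun i => if i = 0 then a else s (i - 1), ⟨⟨rfl, fun i hi => ?_⟩, hs.1⟩, rfl⟩
    simp [hs.2 (i - 1) (by omega), show i ≠ 0 by omega]
  · rintro t ⟨ht, rfl⟩
    rw [seqWeight_succ, ht.1]

end Sequences

open RatFunc in
theorem finsum_seqWeight_X {K : Type*} [Field K] (k : ℕ) (N : ℕ → ℕ) (a : ℕ) :
    ∑ᶠ t ∈ seqsFrom k a, seqWeight (X : RatFunc K) N t k =
      qmultinom X N (k + 1) * qbinom X (∑ i ∈ range k, N (i + 1)) a := by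
  induction k generalizing N a with
  | zero =>
    have hM : qmultinom (X : RatFunc K) N 1 = 1 := by
      simp [qmultinom, div_self (qfact_X_ne_zero (K := K) _)]
    obtain rfl | ha := Nat.eq_zero_or_pos a
    · have hS : seqsFrom 0 0 = {0} := by
        ext t
        simp only [seqsFrom, Set.mem_ofPred_eq, Set.mem_singleton_iff, zero_le, true_implies,
          funext_iff, Pi.zero_apply]
        exact ⟨fun h => h.2, fun h => ⟨h 0, h⟩⟩
      simp [hS, seqWeight, hM, qbinom_zero_right]
    · have hS : seqsFrom 0 a = ∅ :=
        Set.eq_empty_of_forall_notMem fun t ht => ha.ne' (ht.1.symm.trans (ht.2 0 le_rfl))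
      rw [hS, finsum_mem_empty, sum_range_zero, qbinom_of_lt _ (by exact_mod_cast ha), mul_zero]
  | succ k ih =>
    set P := ∑ i ∈ range k, N (i + 2)
    rw [finsum_seqWeight_succ _ N k a (R := N 0 + a + P + 1) (by omega)]
    simp_rw [ih]
    calc ∑ b ∈ range (N 0 + a + P + 1), stepWeight (X : RatFunc K) N 0 a b *
            (qmultinom X (fun i => N (i + 1)) (k + 1) * qbinom X P b)
        = qbinom X (N 0 + a) (N 0) * qmultinom X (fun i => N (i + 1)) (k + 1) *
            ∑ b ∈ range (N 0 + a + P + 1),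
              X ^ ((b : ℤ) * ((N 0 + N 1 : ℕ) - (N 0 + a : ℤ) + b)) *
                qbinom X (N 0 + N 1) ((N 0 + a : ℤ) - b) * qbinom X P b := by
          rw [mul_sum]
          refine sum_congr rfl fun b _ => ?_
          rw [stepWeight,
            show ((N 0 + N 1 : ℕ) : ℤ) - (N 0 + a : ℤ) = (N 1 : ℤ) - a by push_cast; ring]
          ring
      _ = qbinom X (N 0 + a) (N 0) * qmultinom X (fun i => N (i + 1)) (k + 1) *
            qbinom X (N 0 + (N 1 + P)) ((N 0 : ℤ) + a) := by
          rw [qbinom_vandermonde _ _ _ (by omega), add_assoc]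
      _ = qmultinom X N (k + 2) * qbinom X (∑ i ∈ range (k + 1), N (i + 1)) a := by
          have hS : ∑ i ∈ range (k + 2), N i = N 0 + (N 1 + P) := by
            rw [sum_range_succ', sum_range_succ', add_comm, add_comm _ (N 1)]
          have hS' : ∑ i ∈ range (k + 1), N (i + 1) = N 1 + P := by
            rw [sum_range_succ', add_comm]
          have h := qbinom_mul_qbinom (K := K) (N 0 + (N 1 + P)) (N 0) a
          rw [Nat.add_sub_cancel_left] at h
          rw [qmultinom_succ N (k + 1), hS, hS']
          linear_combination qmultinom X (fun i => N (i + 1)) (k + 1) * h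

/-- **q-multinomial identity.** For `k ≥ 1` and nonnegative integers
`n1, …, nk`,
`Σ_{t1,…,tk ≥ 0, t1 = tk = 0} Π_{i=1}^{k-1}
    q^{t_{i+1}(n_{i+1} - t_i + t_{i+1})} [n_i + t_i choose n_i]_q
      [n_i + n_{i+1} choose n_i + t_i - t_{i+1}]_q
  = [n1 + ⋯ + nk choose n1, …, nk]_q`,
stated in the field of rational functions in `q = RatFunc.X`. -/
theorem q_multinomial_identity (k : ℕ) (hk : 1 ≤ k) (N : ℕ → ℕ) :
    ∑ᶠ t ∈ {t : ℕ → ℕ | t 0 = 0 ∧ t (k - 1) = 0 ∧ ∀ i, k ≤ i → t i = 0},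
        ∏ i ∈ Finset.range (k - 1),
          (RatFunc.X : RatFunc ℚ) ^
              ((t (i + 1) : ℤ) * ((N (i + 1) : ℤ) - (t i : ℤ) + (t (i + 1) : ℤ))) *
            qbinom (RatFunc.X : RatFunc ℚ) (N i + t i) ((N i : ℤ)) *
            qbinom (RatFunc.X : RatFunc ℚ) (N i + N (i + 1))
              ((N i : ℤ) + (t i : ℤ) - (t (i + 1) : ℤ))
      = qfact (RatFunc.X : RatFunc ℚ) (∑ i ∈ Finset.range k, N i) /
          ∏ i ∈ Finset.range k, qfact (RatFunc.X : RatFunc ℚ) (N i) := by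
  obtain ⟨κ, rfl⟩ : ∃ κ, k = κ + 1 := ⟨k - 1, by omega⟩
  have hS : {t : ℕ → ℕ | t 0 = 0 ∧ t (κ + 1 - 1) = 0 ∧ ∀ i, κ + 1 ≤ i → t i = 0} =
      seqsFrom κ 0 := by
    ext t
    refine ⟨fun ⟨h0, hκ, h⟩ => ⟨h0, fun i hi => ?_⟩,
      fun ⟨h0, h⟩ => ⟨h0, h κ le_rfl, fun i hi => h i (by omega)⟩⟩
    rcases hi.eq_or_lt with rfl | hi
    exacts [hκ, h i hi]
  rw [hS]
  have h := finsum_seqWeight_X (K := ℚ) κ N 0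
  rw [Nat.cast_zero, qbinom_zero_right, mul_one] at h
  exact h

end DyckTilings
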